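/- The set of all pairs (a,b) ∈ ℂ² satisfying the five equations (E1)–(E5) is exactly {(2,2), (−1,1)} ∪ {(a, 2a−2) : a ∈ ℂ, a² − 3a + 1 = 0} ∪ {(a, 2) : a ∈ ℂ, a² + a − 1 = 0}, a set of six points. -/

import Mathlib

/-!
Subtracting (E5) from (E1) leaves `(b - 2) * (2ab - a³ + 1) = 0`. On `b = 2`, (E5) becomes
`(a - 2) (a² + a - 1)² = 0`. On `2ab = a³ - 1`, eliminating `b` from (E1) and (E2) leaves
`(a + 1) (a² - 3a + 1) = 0`, and then `2a (b - 2a + 2) = (2ab - a³ + 1) + (a - 1) (a² - 3a + 1)`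
forces `b = 2a - 2` (note `a ≠ 0`). The six points are distinct because their first coordinates
are roots of the pairwise coprime, separable polynomials `(X - 2)(X + 1)`, `X² - 3X + 1` and
`X² + X - 1`.
-/

/-- The five defining equations (E1)–(E5) of the fundamental algebraic set
`F₂(T₄,₅)` in the coordinates `(a, b) = (x₁₂, x₁₃)`. -/
def F2Eqns (a b : ℂ) : Prop :=
  a ^ 5 - 4 * a ^ 3 * b + 3 * a ^ 3 + 3 * a * b ^ 2 - 2 * a * b - 3 * a = 2 ∧
  a ^ 6 - 4 * a ^ 4 * b + 2 * a ^ 4 + 3 * a ^ 2 * b ^ 2 + a ^ 2 * b - 5 * a ^ 2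
    - b ^ 2 + 2 = a ∧
  a ^ 4 * b - a ^ 4 - 3 * a ^ 2 * b ^ 2 + 4 * a ^ 2 * b + b ^ 3 - 3 * b = a ∧
  a ^ 5 * b - a ^ 5 - 4 * a ^ 3 * b ^ 2 + 6 * a ^ 3 * b + 3 * a * b ^ 3 - a ^ 3
    - 3 * a * b ^ 2 - 5 * a * b + 3 * a = b ∧
  a ^ 5 - 3 * a ^ 3 * b + a ^ 3 + a * b ^ 2 + 2 * a * b - 3 * a = b

theorem ncard_setOf_quadratic_eq_zero {K : Type*} [Field K] [IsSepClosed K] [NeZero (2 : K)]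
    {a b c : K} (ha : a ≠ 0) (hd : discrim a b c ≠ 0) :
    {x : K | a * (x * x) + b * x + c = 0}.ncard = 2 := by
  obtain ⟨s, hs⟩ := IsSepClosed.exists_eq_mul_self (discrim a b c)
  have hs0 : s ≠ 0 := by rintro rfl; exact hd (by simpa using hs)
  have hroots : {x : K | a * (x * x) + b * x + c = 0} =
      {(-b + s) / (2 * a), (-b - s) / (2 * a)} :=
    Set.ext (quadratic_eq_zero_iff ha hs)
  rw [hroots, Set.ncard_pair]
  intro h
  field_simp at h
  have h2s : (2 : K) * s = 0 := by linear_combination h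
  exact hs0 ((mul_eq_zero.mp h2s).resolve_left two_ne_zero)

theorem Set.setOf_and_snd_eq_eq_graphOn {α β : Type*} (P : α → Prop) (f : α → β) :
    {p : α × β | P p.1 ∧ p.2 = f p.1} = {a | P a}.graphOn f := by
  ext p
  simp [eq_comm]

namespace F2Eqns

variable {a b : ℂ}

theorem eq_two_or_of_snd_eq_two (h : F2Eqns a 2) : a = 2 ∨ a ^ 2 + a - 1 = 0 := by
  have hfac : (a - 2) * (a ^ 2 + a - 1) ^ 2 = 0 := by linear_combination h.2.2.2.2
  rcases mul_eq_zero.mp hfac with ha | hq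
  · exact Or.inl (sub_eq_zero.mp ha)
  · exact Or.inr (pow_eq_zero_iff two_ne_zero |>.mp hq)

theorem of_two_mul_mul_eq_cube_sub_one (h : F2Eqns a b) (hc : 2 * a * b - a ^ 3 + 1 = 0) :
    (a = -1 ∧ b = 1) ∨ (a ^ 2 - 3 * a + 1 = 0 ∧ b = 2 * a - 2) := by
  obtain ⟨h1, h2, -⟩ := h
  have hg : (a + 1) * (a ^ 2 - 3 * a + 1) = 0 := by
    linear_combination (-2*a^6 - 4*a^5 + 6*a^4 + 8*a^3 - 4*a^2) * h1 +
      (2*a^5 + 4*a^4 - 4*a^3 - 4*a^2) * h2 +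
      (-2*a^4*b - 4*a^3*b + 4*a^2*b - 2*a*b + 2*a^4 + 10*a^3 - 2*a^2 - 2*a + 1) * hc
  rcases mul_eq_zero.mp hg with ha | hq
  · obtain rfl : a = -1 := by linear_combination ha
    exact Or.inl ⟨rfl, by linear_combination (-1/2 : ℂ) * hc⟩
  · have ha0 : a ≠ 0 := by rintro rfl; norm_num at hq
    have h2ab : 2 * a * (b - (2 * a - 2)) = 0 := by linear_combination hc + (a - 1) * hq
    have hb : b - (2 * a - 2) = 0 :=
      (mul_eq_zero.mp h2ab).resolve_left (mul_ne_zero two_ne_zero ha0)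
    exact Or.inr ⟨hq, sub_eq_zero.mp hb⟩

theorem of_sq_sub_three_mul_add_one_eq_zero (hq : a ^ 2 - 3 * a + 1 = 0) :
    F2Eqns a (2 * a - 2) := by
  refine ⟨?_, ?_, ?_, ?_, ?_⟩
  · linear_combination (a^3 - 5*a^2 + 7*a - 2) * hq
  · linear_combination (a^4 - 5*a^3 + 6*a^2 + a - 2) * hq
  · linear_combination (2*a^3 - 9*a^2 + 11*a - 2) * hq
  · linear_combination (2*a^4 - 13*a^3 + 27*a^2 - 19*a + 2) * hq
  · linear_combination (a^3 - 3*a^2 + a + 2) * hq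

theorem of_sq_add_sub_one_eq_zero (hq : a ^ 2 + a - 1 = 0) : F2Eqns a 2 := by
  refine ⟨?_, ?_, ?_, ?_, ?_⟩
  · linear_combination (a^3 - a^2 - 3*a + 2) * hq
  · linear_combination (a^4 - a^3 - 4*a^2 + 3*a + 2) * hq
  · linear_combination (a^2 - a - 2) * hq
  · linear_combination (a^3 - a^2 - 3*a + 2) * hq
  · linear_combination (a^3 - a^2 - 3*a + 2) * hq

end F2Eqns

theorem f2Eqns_iff {a b : ℂ} : F2Eqns a b ↔ (a = 2 ∧ b = 2) ∨ (a = -1 ∧ b = 1) ∨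
    (a ^ 2 - 3 * a + 1 = 0 ∧ b = 2 * a - 2) ∨ (a ^ 2 + a - 1 = 0 ∧ b = 2) := by
  constructor
  · intro h
    have hfac : (b - 2) * (2 * a * b - a ^ 3 + 1) = 0 := by linear_combination h.1 - h.2.2.2.2
    rcases mul_eq_zero.mp hfac with hb | hc
    · obtain rfl : b = 2 := sub_eq_zero.mp hb
      rcases h.eq_two_or_of_snd_eq_two with ha | hq
      · exact Or.inl ⟨ha, rfl⟩
      · exact Or.inr (Or.inr (Or.inr ⟨hq, rfl⟩))
    · rcases h.of_two_mul_mul_eq_cube_sub_one hc with hab | hab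
      · exact Or.inr (Or.inl hab)
      · exact Or.inr (Or.inr (Or.inl hab))
  · rintro (⟨rfl, rfl⟩ | ⟨rfl, rfl⟩ | ⟨hq, rfl⟩ | ⟨hq, rfl⟩)
    · norm_num [F2Eqns]
    · norm_num [F2Eqns]
    · exact F2Eqns.of_sq_sub_three_mul_add_one_eq_zero hq
    · exact F2Eqns.of_sq_add_sub_one_eq_zero hq

theorem setOf_f2Eqns :
    {p : ℂ × ℂ | F2Eqns p.1 p.2} =
      ({((2 : ℂ), (2 : ℂ)), ((-1 : ℂ), (1 : ℂ))} ∪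
        {p : ℂ × ℂ | p.1 ^ 2 - 3 * p.1 + 1 = 0 ∧ p.2 = 2 * p.1 - 2} ∪
        {p : ℂ × ℂ | p.1 ^ 2 + p.1 - 1 = 0 ∧ p.2 = 2}) := by
  ext ⟨a, b⟩
  simp only [Set.mem_ofPred_eq, Set.mem_union, Set.mem_insert_iff, Set.mem_singleton_iff,
    Prod.mk.injEq, f2Eqns_iff]
  tauto

theorem ncard_setOf_sq_sub_three_mul_add_one_eq_zero :
    {a : ℂ | a ^ 2 - 3 * a + 1 = 0}.ncard = 2 := by
  convert ncard_setOf_quadratic_eq_zero (a := (1 : ℂ)) (b := -3) (c := 1) one_ne_zero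
    (by norm_num [discrim]) using 4
  ring_nf

theorem ncard_setOf_sq_add_sub_one_eq_zero : {a : ℂ | a ^ 2 + a - 1 = 0}.ncard = 2 := by
  convert ncard_setOf_quadratic_eq_zero (a := (1 : ℂ)) (b := 1) (c := -1) one_ne_zero
    (by norm_num [discrim]) using 4
  ring_nf

theorem sq_add_sub_one_ne_zero_of_sq_sub_three_mul_add_one_eq_zero {a : ℂ}
    (h₁ : a ^ 2 - 3 * a + 1 = 0) : a ^ 2 + a - 1 ≠ 0 := by
  intro h₂
  have : (-4 : ℂ) = 0 := by linear_combination 16 * h₁ - (4 * a - 10) * (h₂ - h₁)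
  norm_num at this

theorem ncard_explicit_solutions :
    ({((2 : ℂ), (2 : ℂ)), ((-1 : ℂ), (1 : ℂ))} ∪
        {p : ℂ × ℂ | p.1 ^ 2 - 3 * p.1 + 1 = 0 ∧ p.2 = 2 * p.1 - 2} ∪
        {p : ℂ × ℂ | p.1 ^ 2 + p.1 - 1 = 0 ∧ p.2 = 2}).ncard = 6 := by
  set P : Set (ℂ × ℂ) := {(2, 2), (-1, 1)}
  set G₁ := {a : ℂ | a ^ 2 - 3 * a + 1 = 0}.graphOn fun a ↦ 2 * a - 2
  set G₂ := {a : ℂ | a ^ 2 + a - 1 = 0}.graphOn fun _ ↦ (2 : ℂ)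
  have hG₁fin : G₁.Finite := (Set.finite_of_ncard_ne_zero (by
    rw [ncard_setOf_sq_sub_three_mul_add_one_eq_zero]; norm_num)).image _
  have hG₂fin : G₂.Finite := (Set.finite_of_ncard_ne_zero (by
    rw [ncard_setOf_sq_add_sub_one_eq_zero]; norm_num)).image _
  have hPG₁ : Disjoint P G₁ :=
    Set.disjoint_left.mpr <| by rintro _ (rfl | rfl) h <;> norm_num [G₁] at h
  have hPG₂ : Disjoint P G₂ :=
    Set.disjoint_left.mpr <| by rintro _ (rfl | rfl) h <;> norm_num [G₂] at h
  have hG₁G₂ : Disjoint G₁ G₂ := Set.disjoint_left.mpr fun p h₁ h₂ ↦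
    sq_add_sub_one_ne_zero_of_sq_sub_three_mul_add_one_eq_zero (Set.mem_graphOn.mp h₁).1
      (Set.mem_graphOn.mp h₂).1
  have hG₁ : {p : ℂ × ℂ | p.1 ^ 2 - 3 * p.1 + 1 = 0 ∧ p.2 = 2 * p.1 - 2} = G₁ :=
    Set.setOf_and_snd_eq_eq_graphOn (fun a ↦ a ^ 2 - 3 * a + 1 = 0) fun a ↦ 2 * a - 2
  have hG₂ : {p : ℂ × ℂ | p.1 ^ 2 + p.1 - 1 = 0 ∧ p.2 = 2} = G₂ :=
    Set.setOf_and_snd_eq_eq_graphOn (fun a ↦ a ^ 2 + a - 1 = 0) fun _ ↦ 2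
  rw [hG₁, hG₂,
    Set.ncard_union_eq (Set.disjoint_union_left.mpr ⟨hPG₂, hG₁G₂⟩)
      ((Set.toFinite P).union hG₁fin) hG₂fin,
    Set.ncard_union_eq hPG₁ (Set.toFinite P) hG₁fin, Set.ncard_pair (by norm_num),
    Set.ncard_graphOn, Set.ncard_graphOn, ncard_setOf_sq_sub_three_mul_add_one_eq_zero,
    ncard_setOf_sq_add_sub_one_eq_zero]

theorem stmt3 :
    {p : ℂ × ℂ | F2Eqns p.1 p.2} =
      ({((2 : ℂ), (2 : ℂ)), ((-1 : ℂ), (1 : ℂ))} ∪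
        {p : ℂ × ℂ | p.1 ^ 2 - 3 * p.1 + 1 = 0 ∧ p.2 = 2 * p.1 - 2} ∪
        {p : ℂ × ℂ | p.1 ^ 2 + p.1 - 1 = 0 ∧ p.2 = 2}) ∧
    {p : ℂ × ℂ | F2Eqns p.1 p.2}.ncard = 6 := by
  rw [setOf_f2Eqns]
  exact ⟨rfl, ncard_explicit_solutions⟩
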